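/- arXiv:1301.4446 — 3 statements merged into one kernel-verified Lean document; each statement's English description precedes it below -/
import Mathlib

section
/- (Lubotzky) Let p be a prime and let G be a finitely generated group which is virtually residually p (i.e. G has a finite-index subgroup which is residually p). Then Aut(G) is virtually residually p. -/
/-- A group is residually finite if every nontrivial element survives in some finite quotient. -/
def ResiduallyFinite (G : Type*) [Group G] : Prop :=
  ∀ g : G, g ≠ 1 → ∃ (F : Type) (_ : Group F) (_ : Finite F) (φ : G →* F), φ g ≠ 1

/-- A group is residually `p` if every nontrivial element survives in some finite `p`-group
quotient. -/
def ResiduallyP (p : ℕ) (G : Type*) [Group G] : Prop :=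
  ∀ g : G, g ≠ 1 →
    ∃ (F : Type) (_ : Group F) (_ : Finite F) (φ : G →* F), IsPGroup p F ∧ φ g ≠ 1

/-- A group is virtually residually `p` if some finite-index subgroup is residually `p`. -/
def VirtuallyResiduallyP (p : ℕ) (G : Type*) [Group G] : Prop :=
  ∃ K : Subgroup G, K.FiniteIndex ∧ ResiduallyP p ↥K

/-!
Pass to a characteristic subgroup `N ≤ K` of finite index: the intersection of the kernels of the
finitely many homomorphisms `G → Sym (G ⧸ K)`. Its `p`-Frattini series `P₀ = N`,
`Pᵢ₊₁ = Pᵢ^p [Pᵢ, Pᵢ]` consists of characteristic subgroups of finite index, and has trivial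
intersection because `N` is residually `p`. The automorphisms acting trivially on `G ⧸ P₁` form a
subgroup `A` of finite index, and the image of `A` in `Aut (G ⧸ Pₖ)` is a `p`-group: an automorphism
in it of prime order `q ≠ p` has a fixed point in each coset of `P₁ ⧸ Pₖ` (these have `p`-power
size), so it fixes the `p`-group `N ⧸ Pₖ` by the Frattini argument, and is then trivial. These
finite `p`-group quotients of `A` separate its elements since the `Pₖ` intersect trivially.
-/

open Subgroup
open scoped commutatorElement

namespace Subgroup

variable {G : Type*} [Group G]

/-- `Hᵖ [H, H]`; for a finite `p`-group `H` this is the Frattini subgroup. -/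
def pFrattini (p : ℕ) (H : Subgroup G) : Subgroup G :=
  closure ((· ^ p) '' (H : Set G)) ⊔ ⁅H, H⁆

variable {p : ℕ} {H K : Subgroup G}

theorem pFrattini_le_iff :
    pFrattini p H ≤ K ↔ (∀ x ∈ H, x ^ p ∈ K) ∧ ∀ x ∈ H, ∀ y ∈ H, ⁅x, y⁆ ∈ K := by
  simp only [pFrattini, sup_le_iff, closure_le, Set.image_subset_iff, commutator_le]
  rfl

theorem pow_mem_pFrattini {x : G} (hx : x ∈ H) : x ^ p ∈ pFrattini p H :=
  (pFrattini_le_iff.mp le_rfl).1 x hx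

theorem commutator_mem_pFrattini {x y : G} (hx : x ∈ H) (hy : y ∈ H) :
    ⁅x, y⁆ ∈ pFrattini p H :=
  (pFrattini_le_iff.mp le_rfl).2 x hx y hy

theorem pFrattini_le : pFrattini p H ≤ H :=
  pFrattini_le_iff.mpr ⟨fun _ hx => pow_mem hx p, fun x hx y hy => by
    rw [commutatorElement_def]
    exact mul_mem (mul_mem (mul_mem hx hy) (inv_mem hx)) (inv_mem hy)⟩

theorem pFrattini_mono : Monotone (pFrattini (G := G) p) := fun _ _ h =>
  pFrattini_le_iff.mpr ⟨fun _ hx => pow_mem_pFrattini (h hx),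
    fun _ hx _ hy => commutator_mem_pFrattini (h hx) (h hy)⟩

theorem map_pFrattini {G' : Type*} [Group G'] (f : G →* G') (H : Subgroup G) :
    (pFrattini p H).map f = pFrattini p (H.map f) := by
  simp only [pFrattini, map_sup, map_commutator, MonoidHom.map_closure, coe_map, Set.image_image,
    map_pow]

theorem map_iterate_pFrattini {G' : Type*} [Group G'] (f : G →* G') (k : ℕ) (H : Subgroup G) :
    ((pFrattini p)^[k] H).map f = (pFrattini p)^[k] (H.map f) :=
  (Function.Semiconj.iterate_right (f := map f) (fun H => map_pFrattini f H) k).eq H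

theorem pFrattini_eq_map_subtype : pFrattini p H = (pFrattini p ⊤ : Subgroup H).map H.subtype := by
  rw [map_pFrattini, ← MonoidHom.range_eq_map, range_subtype]

instance pFrattini_characteristic [H.Characteristic] : (pFrattini p H).Characteristic :=
  characteristic_iff_map_eq.mpr fun φ => by
    rw [map_pFrattini, characteristic_iff_map_eq.mp ‹_› φ]

theorem characteristic_iterate_pFrattini [H.Characteristic] (k : ℕ) :
    ((pFrattini p)^[k] H).Characteristic := by
  induction k with
  | zero => assumption
  | succ k ih => rw [Function.iterate_succ_apply']; infer_instance

theorem pow_pow_mem_iterate_pFrattini {x : G} (hx : x ∈ H) (k : ℕ) :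
    x ^ p ^ k ∈ (pFrattini p)^[k] H := by
  induction k with
  | zero => simpa
  | succ k ih => rw [Function.iterate_succ_apply', pow_succ, pow_mul]; exact pow_mem_pFrattini ih

open scoped IsMulCommutative in
theorem finite_quotient_pFrattini_top [Group.FG G] (hp : p ≠ 0) :
    Finite (G ⧸ pFrattini p (⊤ : Subgroup G)) := by
  have : IsMulCommutative (G ⧸ pFrattini p ⊤) :=
    Normal.quotient_commutative_iff_commutator_le.mpr le_sup_right
  refine CommGroup.finite_of_fg_isMulTorsion _ fun a => ?_
  induction a using QuotientGroup.induction_on with | H x =>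
  refine isOfFinOrder_iff_pow_eq_one.mpr ⟨p, Nat.pos_of_ne_zero hp, ?_⟩
  rw [← QuotientGroup.mk_pow, QuotientGroup.eq_one_iff]
  exact pow_mem_pFrattini (mem_top x)

instance pFrattini_finiteIndex [Group.FG G] [NeZero p] [H.FiniteIndex] :
    (pFrattini p H).FiniteIndex := by
  have := finite_quotient_pFrattini_top (G := H) (p := p) (NeZero.ne p)
  rw [finiteIndex_iff, pFrattini_eq_map_subtype, index_map_subtype]
  exact mul_ne_zero (index_ne_zero_of_finite) FiniteIndex.index_ne_zero

theorem finiteIndex_iterate_pFrattini [Group.FG G] [NeZero p] [H.FiniteIndex] (k : ℕ) :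
    ((pFrattini p)^[k] H).FiniteIndex := by
  induction k with
  | zero => assumption
  | succ k ih => rw [Function.iterate_succ_apply']; infer_instance

end Subgroup

namespace IsPGroup

variable {p : ℕ} [Fact p.Prime] {P : Type*} [Group P] [Finite P]

theorem pFrattini_top_le_of_isCoatom (hP : IsPGroup p P) {M : Subgroup P} (hM : IsCoatom M) :
    pFrattini p ⊤ ≤ M := by
  have := hP.isNilpotent
  have : M.Normal :=
    NormalizerCondition.normal_of_coatom M Group.normalizerCondition_of_isNilpotent hM
  have : Nontrivial (P ⧸ M) := QuotientGroup.nontrivial_iff.mpr hM.1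
  obtain ⟨g, hg⟩ := exists_prime_orderOf_dvd_card' (G := P ⧸ M) p
    ((hP.to_quotient M).card_eq_or_dvd.resolve_left Finite.one_lt_card.ne')
  have hgen : zpowers g = ⊤ := by
    have hM' : M < (zpowers g).comap (QuotientGroup.mk' M) := by
      refine lt_of_le_of_ne (QuotientGroup.le_comap_mk' M _) fun h => ?_
      induction g using QuotientGroup.induction_on with | H x =>
      have hx : x ∈ M := h ▸ mem_zpowers (x : P ⧸ M)
      rw [(QuotientGroup.eq_one_iff x).mpr hx, orderOf_one] at hg
      exact (Fact.out : p.Prime).one_lt.ne hg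
    rw [← map_comap_eq_self_of_surjective (QuotientGroup.mk'_surjective M) (zpowers g),
      hM.2 _ hM', map_top_of_surjective _ (QuotientGroup.mk'_surjective M)]
  have hcard : Nat.card (P ⧸ M) = p := by rw [← hg, ← Nat.card_zpowers, hgen, card_top]
  have : IsCyclic (P ⧸ M) := isCyclic_iff_exists_zpowers_eq_top.mpr ⟨g, hgen⟩
  have hcomm : commutator P ≤ M := Normal.quotient_commutative_iff_commutator_le.mp inferInstance
  refine pFrattini_le_iff.mpr ⟨fun x _ => ?_, fun x _ y _ => hcomm (commutator_mem_commutator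
    (mem_top x) (mem_top y))⟩
  rw [← QuotientGroup.eq_one_iff, QuotientGroup.mk_pow, ← hcard, pow_card_eq_one']

theorem eq_top_of_sup_pFrattini_eq_top (hP : IsPGroup p P) {K : Subgroup P}
    (h : K ⊔ pFrattini p ⊤ = ⊤) : K = ⊤ := by
  have : pFrattini p ⊤ ≤ frattini P := le_iInf₂ fun _ hM => hP.pFrattini_top_le_of_isCoatom hM
  exact frattini_nongenerating (eq_top_mono (sup_le_sup_left this K) h)

theorem le_of_le_sup_pFrattini {Q : Type*} [Group Q] {M L : Subgroup Q} [Finite M]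
    (hM : IsPGroup p M) (h : M ≤ L ⊓ M ⊔ pFrattini p M) : M ≤ L := by
  have htop : L.subgroupOf M ⊔ pFrattini p ⊤ = ⊤ := by
    rw [eq_top_iff, ← map_le_map_iff_of_injective M.subtype_injective, Subgroup.map_sup,
      subgroupOf_map_subtype, ← pFrattini_eq_map_subtype, ← MonoidHom.range_eq_map, range_subtype]
    exact h
  exact subgroupOf_eq_top.mp (hM.eq_top_of_sup_pFrattini_eq_top htop)

theorem pFrattini_lt (hP : IsPGroup p P) {H : Subgroup P} (hH : H ≠ ⊥) : pFrattini p H < H := by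
  refine pFrattini_le.lt_of_ne fun h => hH (eq_bot_iff.mpr ?_)
  refine le_of_le_sup_pFrattini (hP.to_subgroup H) ?_
  rw [h]
  exact le_sup_right

theorem exists_iterate_pFrattini_eq_bot (hP : IsPGroup p P) :
    ∃ k, (pFrattini p)^[k] (⊤ : Subgroup P) = ⊥ := by
  suffices ∀ H : Subgroup P, ∃ k, (pFrattini p)^[k] H = ⊥ from this ⊤
  intro H
  induction H using WellFoundedLT.induction with | ind H ih =>
  by_cases hH : H = ⊥
  · exact ⟨0, hH⟩
  · obtain ⟨k, hk⟩ := ih _ (hP.pFrattini_lt hH)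
    exact ⟨k + 1, hk⟩

theorem of_forall_orderOf_prime (h : ∀ g : P, (orderOf g).Prime → orderOf g = p) :
    IsPGroup p P := by
  rw [isPGroup_iff_primeFactors_card_subset (Fact.out : p.Prime).ne_zero]
  intro q hq
  have := Fact.mk (Nat.prime_of_mem_primeFactors hq)
  obtain ⟨g, hg⟩ := exists_prime_orderOf_dvd_card' q (Nat.dvd_of_mem_primeFactors hq)
  rw [← hg, h g (hg ▸ Fact.out), (Fact.out : p.Prime).primeFactors]
  exact Finset.mem_singleton_self p

end IsPGroup

namespace MulAut

section congruence

variable {Q : Type*} [Group Q]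

def congruenceSubgroup (M : Subgroup Q) : Subgroup (MulAut Q) where
  carrier := {β | ∀ x, x⁻¹ * β x ∈ M}
  one_mem' x := by simp
  mul_mem' {a b} ha hb x := by simpa [mul_assoc] using mul_mem (hb x) (ha (b x))
  inv_mem' {a} ha x := by simpa using inv_mem (ha (a⁻¹ x))

theorem mem_congruenceSubgroup {M : Subgroup Q} {β : MulAut Q} :
    β ∈ congruenceSubgroup M ↔ ∀ x, x⁻¹ * β x ∈ M :=
  Iff.rfl

variable [Finite Q] {p q : ℕ} [Fact p.Prime] [Fact q.Prime]

theorem exists_fixed_of_mem_congruenceSubgroup {M : Subgroup Q} (hM : IsPGroup p M) (hqp : q ≠ p)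
    {β : MulAut Q} (hβ : β ∈ congruenceSubgroup M) (hq : β ^ q = 1) (x : Q) :
    ∃ y, x⁻¹ * y ∈ M ∧ β y = y := by
  classical
  have := Fintype.ofFinite Q
  let σ := (MulAut.toPerm Q β).subtypePerm (p := fun y => x⁻¹ * y ∈ M) fun y => by
    have hy := hβ y
    show x⁻¹ * β y ∈ M ↔ x⁻¹ * y ∈ M
    constructor
    · intro h; simpa [mul_assoc] using mul_mem h (inv_mem hy)
    · intro h; simpa [mul_assoc] using mul_mem h hy
  have hσ : σ ^ q ^ 1 = 1 := by
    ext y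
    simp [σ, Equiv.Perm.subtypePerm_pow, ← map_pow, hq]
  obtain ⟨a, ha⟩ := hM.exists_card_eq
  have hcard : Fintype.card {y // x⁻¹ * y ∈ M} = p ^ a := by
    rw [Fintype.card_eq_nat_card, ← ha]
    exact Nat.card_congr ((Equiv.mulLeft x⁻¹).subtypeEquiv fun _ => Iff.rfl)
  have hndvd : ¬ q ∣ p ^ a := fun h =>
    hqp ((Nat.prime_dvd_prime_iff_eq Fact.out Fact.out).mp ((Fact.out : q.Prime).dvd_of_dvd_pow h))
  obtain ⟨⟨y, hy⟩, hfix⟩ := Equiv.Perm.exists_fixed_point_of_prime (hcard ▸ hndvd) hσ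
  exact ⟨y, hy, congrArg Subtype.val hfix⟩

theorem eq_one_of_mem_congruenceSubgroup (hqp : q ≠ p) {M₀ M₁ : Subgroup Q} (hM₀ : IsPGroup p M₀)
    (hM₁ : M₁ ≤ pFrattini p M₀) {β : MulAut Q} (hβ : β ∈ congruenceSubgroup M₁) (hq : β ^ q = 1) :
    β = 1 := by
  have hM₁₀ : M₁ ≤ M₀ := hM₁.trans pFrattini_le
  -- `β` fixes a point in each coset `x M₁` with `x ∈ M₀`; these points generate `M₀`.
  have hfix : M₀ ≤ (β : Q →* Q).eqLocus (MonoidHom.id Q) := by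
    refine IsPGroup.le_of_le_sup_pFrattini hM₀ fun x hx => ?_
    obtain ⟨y, hxy, hy⟩ := exists_fixed_of_mem_congruenceSubgroup (hM₀.to_le hM₁₀) hqp hβ hq x
    have hyM₀ : y ∈ M₀ := by simpa using mul_mem hx (hM₁₀ hxy)
    rw [show x = y * (x⁻¹ * y)⁻¹ by group]
    exact mul_mem (mem_sup_left ⟨hy, hyM₀⟩) (mem_sup_right (inv_mem (hM₁ hxy)))
  ext x
  set d := x⁻¹ * β x
  have hd : d ∈ M₀ := hM₁₀ (hβ x)
  have hβd : β d = d := hfix hd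
  have hβx : β x = x * d := by simp [d]
  have hpow (n : ℕ) : (β ^ n) x = x * d ^ n := by
    induction n with
    | zero => simp
    | succ n ih => rw [pow_succ', mul_apply, ih, map_mul, map_pow, hβd, hβx, pow_succ', mul_assoc]
  have hdq : (⟨d, hd⟩ : M₀) ^ q = 1 := Subtype.ext (by simpa [hq] using (hpow q).symm)
  have hcop : p.Coprime q := (Nat.coprime_primes Fact.out Fact.out).mpr hqp.symm
  have hd1 : (⟨d, hd⟩ : M₀) = 1 := orderOf_eq_one_iff.mp
    ((hM₀.orderOf_coprime hcop _).eq_one_of_dvd (orderOf_dvd_of_pow_eq_one hdq))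
  exact (inv_mul_eq_one.mp (congrArg Subtype.val hd1)).symm

theorem isPGroup_congruenceSubgroup {M₀ M₁ : Subgroup Q} (hM₀ : IsPGroup p M₀)
    (hM₁ : M₁ ≤ pFrattini p M₀) : IsPGroup p (congruenceSubgroup M₁) :=
  IsPGroup.of_forall_orderOf_prime fun β hβ => by
    by_contra hne
    have := Fact.mk hβ
    have h1 : (β : MulAut Q) = 1 := eq_one_of_mem_congruenceSubgroup hne hM₀ hM₁ β.2
      (by rw [← orderOf_coe]; exact pow_orderOf_eq_one _)
    exact Nat.not_prime_one (orderOf_eq_one_iff.mpr (Subtype.ext h1) ▸ hβ)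

end congruence

variable {G : Type*} [Group G]

def quotient (H : Subgroup G) [H.Characteristic] : MulAut G →* MulAut (G ⧸ H) where
  toFun φ := QuotientGroup.congr H H φ (characteristic_iff_map_eq.mp ‹_› φ)
  map_one' := by ext x; induction x using QuotientGroup.induction_on; rfl
  map_mul' _ _ := by ext x; induction x using QuotientGroup.induction_on; rfl

variable (H : Subgroup G) [H.Characteristic]

@[simp]
theorem quotient_apply_mk (φ : MulAut G) (x : G) : quotient H φ x = (φ x : G ⧸ H) :=
  rfl

theorem congruenceSubgroup_eq_ker_quotient : congruenceSubgroup H = (quotient H).ker := by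
  ext φ
  rw [mem_congruenceSubgroup, MonoidHom.mem_ker, MulEquiv.ext_iff, QuotientGroup.forall_mk]
  simp only [quotient_apply_mk, one_apply, QuotientGroup.eq]
  exact forall_congr' fun x => by rw [← inv_mem_iff, mul_inv_rev, inv_inv]

instance [H.FiniteIndex] : (congruenceSubgroup H).FiniteIndex := by
  rw [congruenceSubgroup_eq_ker_quotient]
  infer_instance

theorem quotient_mem_congruenceSubgroup_map {M : Subgroup G} {φ : MulAut G}
    (hφ : φ ∈ congruenceSubgroup M) :
    quotient H φ ∈ congruenceSubgroup (M.map (QuotientGroup.mk' H)) := by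
  rw [mem_congruenceSubgroup, QuotientGroup.forall_mk]
  exact fun x => ⟨_, hφ x, by simp⟩

end MulAut

theorem finite_monoidHom_of_fg (G F : Type*) [Group G] [Group.FG G] [Monoid F] [Finite F] :
    Finite (G →* F) := by
  obtain ⟨S, hS⟩ := Group.FG.out (G := G)
  exact Finite.of_injective (fun f : G →* F => fun s : S => f s) fun f g h =>
    MonoidHom.eq_of_eqOn_dense hS fun s hs => congrFun h ⟨s, hs⟩

namespace Subgroup

variable {G : Type*} [Group G]

theorem characteristic_iInf_ker (F : Type*) [Group F] :
    (⨅ ρ : G →* F, ρ.ker).Characteristic :=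
  characteristic_iff_le_comap.mpr fun φ x hx => by
    simp only [mem_comap, mem_iInf, MonoidHom.mem_ker] at hx ⊢
    exact fun ρ => hx (ρ.comp φ.toMonoidHom)

theorem exists_characteristic_finiteIndex_le [Group.FG G] (K : Subgroup G) [K.FiniteIndex] :
    ∃ N : Subgroup G, N.Characteristic ∧ N.FiniteIndex ∧ N ≤ K := by
  have := finite_monoidHom_of_fg G (Equiv.Perm (G ⧸ K))
  refine ⟨⨅ ρ : G →* Equiv.Perm (G ⧸ K), ρ.ker, characteristic_iInf_ker _,
    finiteIndex_iInf fun _ => inferInstance, ?_⟩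
  exact (iInf_le _ (MulAction.toPermHom G (G ⧸ K))).trans (normalCore_eq_ker K ▸ normalCore_le K)

end Subgroup

theorem ResiduallyP.of_injective {p : ℕ} {H G : Type*} [Group H] [Group G] (hG : ResiduallyP p G)
    {f : H →* G} (hf : Function.Injective f) : ResiduallyP p H := fun h hh =>
  let ⟨F, hFG, hFfin, φ, hF, hφ⟩ := hG (f h) ((map_ne_one_iff f hf).mpr hh)
  ⟨F, hFG, hFfin, φ.comp f, hF, hφ⟩

theorem ResiduallyP.of_forall_exists_hom.{u, v} {p : ℕ} {G : Type u} [Group G]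
    (h : ∀ g : G, g ≠ 1 → ∃ (F : Type v) (_ : Group F) (_ : Finite F) (φ : G →* F),
      IsPGroup p F ∧ φ g ≠ 1) : ResiduallyP p G := fun g hg =>
  have ⟨F, _, _, φ, hF, hφ⟩ := h g hg
  ⟨Shrink.{0} F, inferInstance, inferInstance, Shrink.mulEquiv.symm.toMonoidHom.comp φ,
    hF.of_equiv Shrink.mulEquiv.symm, by simpa using hφ⟩

namespace Subgroup

variable {p : ℕ} {G : Type*} [Group G]

theorem exists_notMem_iterate_pFrattini [Fact p.Prime] {N : Subgroup G} (hN : ResiduallyP p N)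
    {g : G} (hg : g ∈ N) (hg1 : g ≠ 1) : ∃ k, g ∉ (pFrattini p)^[k] N := by
  obtain ⟨F, _, _, φ, hF, hφ⟩ := hN ⟨g, hg⟩ (by simpa [Subtype.ext_iff] using hg1)
  obtain ⟨k, hk⟩ := hF.exists_iterate_pFrattini_eq_bot
  refine ⟨k, fun hgk => hφ ?_⟩
  rw [← range_subtype N, MonoidHom.range_eq_map, ← map_iterate_pFrattini] at hgk
  have hφk := mem_map_of_mem φ ((mem_map_iff_mem (x := ⟨g, hg⟩) N.subtype_injective).mp hgk)
  rw [map_iterate_pFrattini] at hφk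
  simpa [hk] using pFrattini_mono.iterate k le_top hφk

theorem isPGroup_map_mk'_iterate_pFrattini (H : Subgroup G) (k : ℕ)
    [((pFrattini p)^[k] H).Normal] :
    IsPGroup p (H.map (QuotientGroup.mk' ((pFrattini p)^[k] H))) := by
  rintro ⟨_, x, hx, rfl⟩
  refine ⟨k, Subtype.ext ?_⟩
  simpa [← QuotientGroup.mk_pow] using pow_pow_mem_iterate_pFrattini hx k

end Subgroup

open MulAut in
theorem residuallyP_congruenceSubgroup_pFrattini {p : ℕ} [Fact p.Prime] {G : Type*} [Group G]
    [Group.FG G] {N : Subgroup G} [N.Characteristic] [N.FiniteIndex] (hN : ResiduallyP p N) :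
    ResiduallyP p (congruenceSubgroup (pFrattini p N)) := by
  refine ResiduallyP.of_forall_exists_hom fun ⟨α, hα⟩ hα1 => ?_
  obtain ⟨x, hx⟩ : ∃ x, α x ≠ x := by
    by_contra! h
    exact hα1 (Subtype.ext (MulEquiv.ext h))
  obtain ⟨k, hk⟩ := exists_notMem_iterate_pFrattini hN (pFrattini_le (hα x))
    fun h => hx (inv_mul_eq_one.mp h).symm
  have := characteristic_iterate_pFrattini (p := p) (H := N) k
  have := finiteIndex_iterate_pFrattini (p := p) (H := N) k
  set P := (pFrattini p)^[k] N
  let φ := ((quotient P).comp (congruenceSubgroup (pFrattini p N)).subtype).codRestrict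
    (congruenceSubgroup ((pFrattini p N).map (QuotientGroup.mk' P)))
    fun β => quotient_mem_congruenceSubgroup_map P β.2
  refine ⟨_, inferInstance, inferInstance, φ, isPGroup_congruenceSubgroup
    (isPGroup_map_mk'_iterate_pFrattini N k) (map_pFrattini _ _).le, fun h => hk ?_⟩
  have hαx : quotient P α x = x := DFunLike.congr_fun (congrArg Subtype.val h) (x : G ⧸ P)
  rw [quotient_apply_mk, QuotientGroup.eq] at hαx
  simpa using inv_mem hαx

/-- **Lubotzky.** If `G` is a finitely generated virtually residually `p` group,
then `Aut(G)` is virtually residually `p`. -/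
theorem statement6 (p : ℕ) (hp : p.Prime) (G : Type*) [Group G] (hfg : Group.FG G)
    (h : VirtuallyResiduallyP p G) :
    VirtuallyResiduallyP p (MulAut G) := by
  have := Fact.mk hp
  obtain ⟨K, hK, hKres⟩ := h
  obtain ⟨N, hNchar, hNfi, hNK⟩ := K.exists_characteristic_finiteIndex_le
  exact ⟨_, inferInstance, residuallyP_congruenceSubgroup_pFrattini
    (hKres.of_injective (inclusion_injective hNK))⟩
end

section
/- Let G be a group and H ≤ G a subgroup. Then H is an Aut-splitting subgroup of G if and only if the following three conditions hold: (1) the center Z(G) has finite index in the centralizer C_G(H); (2) there exists a finite-index subgroup A ≤ Aut(G) such that every α ∈ A maps H onto a conjugate of H; (3) Out_{H̲}(G) has finite index in Out_H(G). -/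
section Defs

variable (G : Type*) [Group G]

/-- The subgroup of inner automorphisms of `G`. -/
def Inn : Subgroup (MulAut G) := (MulAut.conj : G →* MulAut G).range

instance Inn.normal : (Inn G).Normal := by
  constructor
  intro n hn φ
  obtain ⟨g, rfl⟩ := hn
  refine ⟨φ g, ?_⟩
  ext x
  simp only [MulAut.conj_apply, MulAut.mul_apply, map_mul, map_inv, MulAut.inv_def,
    MulEquiv.apply_symm_apply]

/-- The outer automorphism group `Out(G) = Aut(G)/Inn(G)`. -/
def Out := MulAut G ⧸ Inn G

instance : Group (Out G) := inferInstanceAs (Group (MulAut G ⧸ Inn G))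

/-- The canonical projection `Aut(G) → Out(G)`. -/
def outProj : MulAut G →* Out G := QuotientGroup.mk' (Inn G)

/-- A surjective homomorphism `f : A → B` splits virtually if it admits a section on some
finite-index subgroup of `B`. -/
def SplitsVirtually {A B : Type*} [Group A] [Group B] (f : A →* B) : Prop :=
  ∃ B' : Subgroup B, B'.FiniteIndex ∧ ∃ s : (↥B') →* A, ∀ x : B', f (s x) = (x : B)

/-- `Aut_{H̲}(G)`: the subgroup of automorphisms of `G` fixing `H` pointwise. -/
def autFix (H : Subgroup G) : Subgroup (MulAut G) where
  carrier := {φ | ∀ h ∈ H, φ h = h}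
  one_mem' := fun _ _ => rfl
  mul_mem' := by
    intro a b ha hb h hh
    show a (b h) = h
    rw [hb h hh, ha h hh]
  inv_mem' := by
    intro a ha h hh
    show a⁻¹ h = h
    calc a⁻¹ h = a⁻¹ (a h) := by rw [ha h hh]
    _ = h := by rw [MulAut.inv_def]; exact a.symm_apply_apply h

/-- `Aut_H(G)`: the subgroup of automorphisms of `G` mapping `H` onto itself. -/
def autSetwise (H : Subgroup G) : Subgroup (MulAut G) where
  carrier := {φ | ∀ g : G, φ g ∈ H ↔ g ∈ H}
  one_mem' := fun _ => Iff.rfl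
  mul_mem' := by
    intro a b ha hb g
    show a (b g) ∈ H ↔ g ∈ H
    rw [ha, hb]
  inv_mem' := by
    intro a ha g
    show a⁻¹ g ∈ H ↔ g ∈ H
    have h1 : a (a⁻¹ g) = g := by rw [MulAut.inv_def]; exact a.apply_symm_apply g
    have := ha (a⁻¹ g)
    rw [h1] at this
    exact this.symm

theorem mem_autSetwise {H : Subgroup G} {φ : MulAut G} :
    φ ∈ autSetwise G H ↔ ∀ g : G, φ g ∈ H ↔ g ∈ H := Iff.rfl

/-- `H` is an Aut-splitting subgroup of `G` if the restriction of `Aut(G) → Out(G)` to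
`Aut_{H̲}(G)` has finite kernel and an image of finite index in `Out(G)`. -/
def IsAutSplitting (H : Subgroup G) : Prop :=
  Finite ((outProj G).comp (autFix G H).subtype).ker ∧
    ((autFix G H).map (outProj G)).FiniteIndex

/-- The conjugate `gKg⁻¹` of a subgroup. -/
def conjSubgroup (g : G) (K : Subgroup G) : Subgroup G :=
  K.map (MulAut.conj g).toMonoidHom

end Defs

/-!
The kernel of `Aut_{H̲}(G) → Out(G)` is `Inn(G) ∩ Aut_{H̲}(G)`, the image of `C_G(H)` under
`g ↦ conj g`, hence isomorphic to `C_G(H)/Z(G)`. An outer class lies in `Out_H(G)` exactly when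
its representatives map `H` onto a conjugate of `H`, so `Out_H(G)` has finite index iff (2)
holds. Finally `Out_{H̲}(G) ≤ Out_H(G) ≤ Out(G)` and indices multiply.
-/

theorem Subgroup.finiteIndex_iff_exists_le_comap {A B : Type*} [Group A] [Group B] {f : A →* B}
    (hf : Function.Surjective f) (S : Subgroup B) :
    S.FiniteIndex ↔ ∃ A' : Subgroup A, A'.FiniteIndex ∧ A' ≤ S.comap f := by
  rw [Subgroup.finiteIndex_iff, ← Subgroup.index_comap_of_surjective S hf,
    ← Subgroup.finiteIndex_iff]
  exact ⟨fun h => ⟨_, h, le_rfl⟩, fun ⟨_, _, hle⟩ => Subgroup.finiteIndex_of_le hle⟩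

theorem Subgroup.finiteIndex_iff_relIndex_ne_zero {G : Type*} [Group G] {K L : Subgroup G}
    (h : K ≤ L) : K.FiniteIndex ↔ K.relIndex L ≠ 0 ∧ L.FiniteIndex := by
  simp only [Subgroup.finiteIndex_iff, ← Subgroup.relIndex_mul_index h, mul_ne_zero_iff]

theorem MulAut.ker_conj {G : Type*} [Group G] :
    (MulAut.conj : G →* MulAut G).ker = Subgroup.center G := by
  ext g
  simp only [MonoidHom.mem_ker, MulEquiv.ext_iff, MulAut.one_apply, MulAut.conj_apply,
    Subgroup.mem_center_iff]
  exact forall_congr' fun x => by rw [mul_inv_eq_iff_eq_mul, eq_comm]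

theorem Subgroup.map_mulAut_mul {G : Type*} [Group G] (φ ψ : MulAut G) (K : Subgroup G) :
    K.map (φ * ψ).toMonoidHom = (K.map ψ.toMonoidHom).map φ.toMonoidHom := by
  rw [Subgroup.map_map]
  rfl

section

variable {G : Type*} [Group G] {H : Subgroup G}

theorem mem_autFix {φ : MulAut G} : φ ∈ autFix G H ↔ ∀ h ∈ H, φ h = h := Iff.rfl

theorem ker_outProj : (outProj G).ker = Inn G := QuotientGroup.ker_mk' _

theorem outProj_conj (g : G) : outProj G (MulAut.conj g) = 1 := by
  rw [← MonoidHom.mem_ker, ker_outProj]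
  exact ⟨g, rfl⟩

theorem conj_mem_autFix_iff {g : G} :
    MulAut.conj g ∈ autFix G H ↔ g ∈ Subgroup.centralizer (H : Set G) := by
  rw [mem_autFix, Subgroup.mem_centralizer_iff]
  exact forall₂_congr fun h _ => by rw [MulAut.conj_apply, mul_inv_eq_iff_eq_mul, eq_comm]

theorem map_conj_centralizer :
    (Subgroup.centralizer (H : Set G)).map MulAut.conj = Inn G ⊓ autFix G H := by
  ext φ
  simp only [Subgroup.mem_map, Subgroup.mem_inf, Inn, MonoidHom.mem_range]
  constructor
  · rintro ⟨g, hg, rfl⟩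
    exact ⟨⟨g, rfl⟩, conj_mem_autFix_iff.mpr hg⟩
  · rintro ⟨⟨g, rfl⟩, hg⟩
    exact ⟨g, conj_mem_autFix_iff.mp hg, rfl⟩

theorem card_ker_outProj_comp_autFix_subtype :
    Nat.card ((outProj G).comp (autFix G H).subtype).ker =
      (Subgroup.center G).relIndex (Subgroup.centralizer (H : Set G)) := by
  rw [← MulAut.ker_conj, Subgroup.relIndex_ker, map_conj_centralizer, ← ker_outProj,
    ← Subgroup.subgroupOf_map_subtype,
    Subgroup.card_map_of_injective (Subgroup.subtype_injective _), Subgroup.subgroupOf,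
    MonoidHom.comap_ker]

theorem finite_ker_outProj_comp_autFix_subtype_iff :
    Finite ((outProj G).comp (autFix G H).subtype).ker ↔
      (Subgroup.center G).relIndex (Subgroup.centralizer (H : Set G)) ≠ 0 := by
  rw [← card_ker_outProj_comp_autFix_subtype, Nat.card_ne_zero, and_iff_right ⟨1⟩]

theorem mem_autSetwise_iff_map_eq {φ : MulAut G} :
    φ ∈ autSetwise G H ↔ H.map φ.toMonoidHom = H := by
  rw [Subgroup.map_equiv_eq_comap_symm', SetLike.ext_iff, (inv_mem_iff (x := φ)).symm,
    mem_autSetwise]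
  rfl

theorem outProj_mem_map_autSetwise_iff {α : MulAut G} :
    outProj G α ∈ (autSetwise G H).map (outProj G) ↔
      ∃ g : G, H.map α.toMonoidHom = conjSubgroup G g H := by
  constructor
  · rintro ⟨β, hβ, hβα⟩
    obtain ⟨_, ⟨g, rfl⟩, rfl⟩ := (QuotientGroup.mk'_eq_mk' _).mp hβα
    have hcomm : β * MulAut.conj g = MulAut.conj (β g) * β := by
      ext x
      simp
    refine ⟨β g, ?_⟩
    rw [hcomm, Subgroup.map_mulAut_mul, mem_autSetwise_iff_map_eq.mp hβ]
    rfl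
  · rintro ⟨g, hg⟩
    refine ⟨(MulAut.conj g)⁻¹ * α, mem_autSetwise_iff_map_eq.mpr ?_, ?_⟩
    · rw [Subgroup.map_mulAut_mul, hg, conjSubgroup, ← Subgroup.map_mulAut_mul, inv_mul_cancel]
      exact Subgroup.map_id H
    · rw [map_mul, map_inv, outProj_conj, inv_one, one_mul]

theorem autFix_le_autSetwise : autFix G H ≤ autSetwise G H := fun φ hφ => by
  rw [mem_autSetwise_iff_map_eq]
  ext x
  refine ⟨?_, fun hx => ⟨x, hx, hφ x hx⟩⟩
  rintro ⟨h, hh, rfl⟩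
  rwa [MulEquiv.coe_toMonoidHom, hφ h hh]

theorem finiteIndex_map_autSetwise_iff :
    ((autSetwise G H).map (outProj G)).FiniteIndex ↔
      ∃ A : Subgroup (MulAut G), A.FiniteIndex ∧
        ∀ α ∈ A, ∃ g : G, H.map α.toMonoidHom = conjSubgroup G g H := by
  rw [Subgroup.finiteIndex_iff_exists_le_comap (f := outProj G)
    (QuotientGroup.mk'_surjective _)]
  simp only [SetLike.le_def, Subgroup.mem_comap, outProj_mem_map_autSetwise_iff]

end

/-- `H` is an Aut-splitting subgroup of `G` iff (1) `Z(G)` has finite index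
in `C_G(H)`, (2) a finite-index subgroup of `Aut(G)` maps `H` onto conjugates of `H`, and
(3) `Out_{H̲}(G)` has finite index in `Out_H(G)`. -/
theorem statement11 (G : Type*) [Group G] (H : Subgroup G) :
    IsAutSplitting G H ↔
      ((Subgroup.center G).relIndex (Subgroup.centralizer (H : Set G)) ≠ 0 ∧
      (∃ A : Subgroup (MulAut G), A.FiniteIndex ∧
        ∀ α ∈ A, ∃ g : G, H.map (MulEquiv.toMonoidHom α) = conjSubgroup G g H) ∧
      ((autFix G H).map (outProj G)).relIndex ((autSetwise G H).map (outProj G)) ≠ 0) := by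
  rw [IsAutSplitting, finite_ker_outProj_comp_autFix_subtype_iff,
    Subgroup.finiteIndex_iff_relIndex_ne_zero (Subgroup.map_mono autFix_le_autSetwise),
    finiteIndex_map_autSetwise_iff]
  tauto
end

section
/- For n ≥ 1 let W_n = ⟨x₁, ..., x_n | x_i² = 1⟩ be the universal Coxeter group of rank n, i.e. the free product of n copies of Z/2Z. Then Out(W_n) virtually embeds in Out(W_{n+1}): there exist a finite-index subgroup O ≤ Out(W_n) and an injective group homomorphism O → Out(W_{n+1}). -/
/-- The universal Coxeter group `W_n = ⟨x₁, …, x_n ∣ x_i² = 1⟩`, the free product of `n` copies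
of `ℤ/2ℤ`. -/
abbrev UniversalCoxeterGroup (n : ℕ) : Type :=
  PresentedGroup (Set.range (fun i : Fin n => FreeGroup.of i ^ 2))

/-!
Elements of `W_n` have unique reduced words (words with no two equal adjacent letters), obtained
from the action of `W_n` on such words by cancelling or prepending a letter. Two consequences
drive the argument: the centralizer of a generator `x` is `{1, x}`, and every element of order
two is conjugate to a generator.

An automorphism `φ` of `W_n` extends to `W_{n+1}` by fixing `x_{n+1}`, and no nontrivial `φ`
extends to an inner automorphism: that would be conjugation by an element centralizing
`x_{n+1}`, i.e. by `1` or `x_{n+1}`, and the retraction `W_{n+1} → W_n` killing `x_{n+1}`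
turns it back into `φ = 1`.

It remains to split `Aut(W_n) → Out(W_n)` over a finite-index subgroup. Take the automorphisms
fixing `x_1` and acting trivially on the finite set `Hom(W_n, S₃)`. An inner one is conjugation
by `1` or `x_1`, and the latter moves a representation sending `x_1, x_2` to non-commuting
transpositions (when `n ≥ 2`; when `n = 1` it is trivial). The image in `Out(W_n)` has finite
index because `Aut(W_n)` permutes the finitely many conjugacy classes of generators, and fixing
the class of `x_1` costs only an inner automorphism.
-/

namespace Subgroup

variable {A B : Type*} [Group A] [Group B]

theorem relIndex_map_map_dvd (f : A →* B) (H K : Subgroup A) :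
    (H.map f).relIndex (K.map f) ∣ H.relIndex K := by
  rw [← relIndex_comap, comap_map_eq]
  exact relIndex_dvd_of_le_left K le_sup_left

theorem finiteIndex_map_inf (f : A →* B) (S K : Subgroup A) [(S.map f).FiniteIndex]
    [K.FiniteIndex] : ((S ⊓ K).map f).FiniteIndex := by
  have hrel : ((S ⊓ K).map f).relIndex (S.map f) ≠ 0 := by
    refine ne_zero_of_dvd_ne_zero ?_ (relIndex_map_map_dvd f _ S)
    rw [inf_comm, inf_relIndex_right]
    have := isFiniteRelIndex_of_finiteIndex (H := K) (K := S)
    exact relIndex_ne_zero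
  constructor
  rw [← relIndex_mul_index (map_mono inf_le_left)]
  exact mul_ne_zero hrel FiniteIndex.index_ne_zero

end Subgroup

theorem splitsVirtually_of_injective_comp_subtype {A B : Type*} [Group A] [Group B]
    (f : A →* B) (K : Subgroup A) (hK : Function.Injective (f.comp K.subtype))
    [(K.map f).FiniteIndex] : SplitsVirtually f := by
  have hrange : (f.comp K.subtype).range = K.map f := by
    rw [MonoidHom.range_comp, K.range_subtype]
  refine ⟨K.map f, ‹_›, K.subtype.comp ((MonoidHom.ofInjective hK).symm.toMonoidHom.comp
    (Subgroup.inclusion hrange.ge)), fun x => ?_⟩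
  have := congrArg Subtype.val ((MonoidHom.ofInjective hK).apply_symm_apply
    (Subgroup.inclusion hrange.ge x))
  rwa [MonoidHom.ofInjective_apply] at this

theorem SplitsVirtually.exists_finiteIndex_injective {A B C : Type*} [Group A] [Group B]
    [Group C] {f : A →* B} (hf : SplitsVirtually f) {g : A →* C} (hg : Function.Injective g) :
    ∃ B' : Subgroup B, B'.FiniteIndex ∧ ∃ φ : B' →* C, Function.Injective φ := by
  obtain ⟨B', hB', s, hs⟩ := hf
  refine ⟨B', hB', g.comp s, hg.comp fun x y hxy => Subtype.ext ?_⟩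
  rw [← hs x, ← hs y, hxy]

namespace MulAut

variable {G : Type*} [Group G]

instance : MulAction (MulAut G) (ConjClasses G) where
  smul φ := ConjClasses.map φ.toMonoidHom
  one_smul c := by
    obtain ⟨g, rfl⟩ := ConjClasses.mk_surjective c
    rfl
  mul_smul φ ψ c := by
    obtain ⟨g, rfl⟩ := ConjClasses.mk_surjective c
    rfl

theorem smul_conjClassesMk (φ : MulAut G) (g : G) :
    φ • ConjClasses.mk g = ConjClasses.mk (φ g) := rfl

variable (G) (F : Type*) [Group F]

def precompPerm : MulAut G →* Equiv.Perm (G →* F) where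
  toFun := MulEquiv.monoidHomCongrLeftEquiv
  map_one' := rfl
  map_mul' _ _ := rfl

variable {G F}

theorem mem_ker_precompPerm {φ : MulAut G} :
    φ ∈ (precompPerm G F).ker ↔ ∀ ρ : G →* F, ρ.comp φ.symm.toMonoidHom = ρ :=
  MonoidHom.mem_ker.trans Equiv.ext_iff

end MulAut

theorem outProj_surjective (G : Type*) [Group G] : Function.Surjective (outProj G) :=
  QuotientGroup.mk'_surjective _

theorem outProj_eq_one_iff {G : Type*} [Group G] {φ : MulAut G} :
    outProj G φ = 1 ↔ ∃ g, MulAut.conj g = φ :=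
  QuotientGroup.eq_one_iff φ

namespace List

variable {α : Type*} [DecidableEq α]

def cancelCons (a : α) (l : List α) : List α :=
  if l.head? = some a then l.tail else a :: l

theorem cancelCons_of_head?_eq {a : α} {l : List α} (h : l.head? = some a) :
    cancelCons a l = l.tail :=
  if_pos h

theorem cancelCons_of_head?_ne {a : α} {l : List α} (h : l.head? ≠ some a) :
    cancelCons a l = a :: l :=
  if_neg h

theorem isChain_cancelCons (a : α) {l : List α} (hl : l.IsChain (· ≠ ·)) :
    (cancelCons a l).IsChain (· ≠ ·) := by
  unfold cancelCons
  split_ifs with h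
  · exact hl.tail
  · exact isChain_cons.mpr ⟨fun b hb hab => h (hab ▸ hb), hl⟩

theorem cancelCons_cancelCons (a : α) {l : List α} (hl : l.IsChain (· ≠ ·)) :
    cancelCons a (cancelCons a l) = l := by
  match l, hl with
  | [], _ => simp [cancelCons]
  | [b], _ => by_cases h : b = a <;> simp [cancelCons, h]
  | b :: c :: t, hl =>
    have hbc := (isChain_cons_cons.mp hl).1
    by_cases h : b = a
    · subst h; simp [cancelCons, Ne.symm hbc]
    · simp [cancelCons, h]

theorem eq_nil_or_eq_singleton_of_cancelCons_eq {a : α} {l : List α} (hl : l.IsChain (· ≠ ·))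
    (h : cancelCons a l = (cancelCons a l.reverse).reverse) : l = [] ∨ l = [a] := by
  match l, hl with
  | [], _ => exact Or.inl rfl
  | [b], _ => by_cases hb : b = a <;> simp_all [cancelCons]
  | b :: c :: t, hl =>
    exfalso
    have hbc := (isChain_cons_cons.mp hl).1
    have hlen := congrArg length h
    unfold cancelCons at h hlen
    split_ifs at h hlen with hhead hlast hlast
    · rw [tail_reverse, reverse_reverse, dropLast_cons_cons, tail_cons] at h
      exact hbc (cons_eq_cons.mp h).1.symm
    · simp at hlen
    · simp at hlen; omega
    · simp_all

end List

namespace UniversalCoxeterGroup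

open List

variable {m n : ℕ}

def gen (i : Fin m) : UniversalCoxeterGroup m := PresentedGroup.of i

@[simp]
theorem gen_mul_gen (i : Fin m) : gen i * gen i = 1 := by
  have h : (PresentedGroup.mk _ (FreeGroup.of i ^ 2) : UniversalCoxeterGroup m) = 1 :=
    (QuotientGroup.eq_one_iff _).mpr (Subgroup.subset_normalClosure ⟨i, rfl⟩)
  rwa [pow_two, map_mul] at h

@[simp]
theorem gen_mul_gen_mul (i : Fin m) (w : UniversalCoxeterGroup m) : gen i * (gen i * w) = w := by
  rw [← mul_assoc, gen_mul_gen, one_mul]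

@[simp]
theorem inv_gen (i : Fin m) : (gen i)⁻¹ = gen i :=
  inv_eq_of_mul_eq_one_right (gen_mul_gen i)

def lift {G : Type*} [Group G] (f : Fin m → G) (hf : ∀ i, f i * f i = 1) :
    UniversalCoxeterGroup m →* G :=
  PresentedGroup.toGroup (f := f) (by rintro _ ⟨i, rfl⟩; simp [pow_two, hf])

@[simp]
theorem lift_gen {G : Type*} [Group G] (f : Fin m → G) (hf : ∀ i, f i * f i = 1) (i : Fin m) :
    lift f hf (gen i) = f i :=
  PresentedGroup.toGroup.of _

@[ext]
theorem hom_ext {G : Type*} [Group G] {f g : UniversalCoxeterGroup m →* G}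
    (h : ∀ i, f (gen i) = g (gen i)) : f = g :=
  PresentedGroup.ext h

theorem mem_closure_range_gen (w : UniversalCoxeterGroup m) :
    w ∈ Subgroup.closure (Set.range gen) :=
  PresentedGroup.closure_range_of _ ▸ Subgroup.mem_top w

def wordProd (l : List (Fin m)) : UniversalCoxeterGroup m := (l.map gen).prod

@[simp]
theorem wordProd_nil : wordProd ([] : List (Fin m)) = 1 := rfl

@[simp]
theorem wordProd_cons (i : Fin m) (l : List (Fin m)) :
    wordProd (i :: l) = gen i * wordProd l := by
  simp [wordProd]

@[simp]
theorem wordProd_append (l l' : List (Fin m)) : wordProd (l ++ l') = wordProd l * wordProd l' := by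
  simp [wordProd]

theorem wordProd_reverse (l : List (Fin m)) : wordProd l.reverse = (wordProd l)⁻¹ := by
  induction l with
  | nil => simp
  | cons i l ih => simp [ih]

theorem wordProd_cancelCons (i : Fin m) (l : List (Fin m)) :
    wordProd (l.cancelCons i) = gen i * wordProd l := by
  unfold cancelCons
  split_ifs with h
  · obtain ⟨t, rfl⟩ : ∃ t, l = i :: t := by
      cases l <;> simp_all
    simp [← mul_assoc]
  · simp

abbrev ReducedWord (m : ℕ) : Type := {l : List (Fin m) // l.IsChain (· ≠ ·)}

def cancelConsPerm (i : Fin m) : Equiv.Perm (ReducedWord m) :=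
  Function.Involutive.toPerm (fun l => ⟨l.1.cancelCons i, isChain_cancelCons i l.2⟩)
    fun l => Subtype.ext (cancelCons_cancelCons i l.2)

def wordAction : UniversalCoxeterGroup m →* Equiv.Perm (ReducedWord m) :=
  lift cancelConsPerm fun i => Equiv.ext fun l => Subtype.ext (cancelCons_cancelCons i l.2)

def normalForm (w : UniversalCoxeterGroup m) : List (Fin m) := (wordAction w ⟨[], .nil⟩).1

theorem isChain_normalForm (w : UniversalCoxeterGroup m) :
    (normalForm w).IsChain (· ≠ ·) :=
  (wordAction w _).2

@[simp]
theorem normalForm_one : normalForm (1 : UniversalCoxeterGroup m) = [] := by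
  rw [normalForm, map_one]
  rfl

theorem normalForm_gen_mul (i : Fin m) (w : UniversalCoxeterGroup m) :
    normalForm (gen i * w) = (normalForm w).cancelCons i := by
  rw [normalForm, map_mul, Equiv.Perm.mul_apply, wordAction, lift_gen]
  rfl

theorem wordProd_normalForm (w : UniversalCoxeterGroup m) : wordProd (normalForm w) = w := by
  induction mem_closure_range_gen w using Subgroup.closure_induction_left with
  | one => rw [normalForm_one, wordProd_nil]
  | mul_left _ hx y _ ih =>
    obtain ⟨i, rfl⟩ := hx
    rw [normalForm_gen_mul, wordProd_cancelCons, ih]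
  | inv_mul_cancel _ hx y _ ih =>
    obtain ⟨i, rfl⟩ := hx
    rw [inv_gen, normalForm_gen_mul, wordProd_cancelCons, ih]

theorem normalForm_wordProd {l : List (Fin m)} (hl : l.IsChain (· ≠ ·)) :
    normalForm (wordProd l) = l := by
  induction l with
  | nil => exact normalForm_one
  | cons i t ih =>
    rw [wordProd_cons, normalForm_gen_mul, ih hl.tail]
    exact cancelCons_of_head?_ne fun h => (isChain_cons.mp hl).1 i h rfl

theorem normalForm_eq_nil_iff {w : UniversalCoxeterGroup m} : normalForm w = [] ↔ w = 1 :=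
  ⟨fun h => by rw [← wordProd_normalForm w, h, wordProd_nil], fun h => h ▸ normalForm_one⟩

theorem normalForm_gen (i : Fin m) : normalForm (gen i) = [i] := by
  simpa using normalForm_wordProd (isChain_singleton i)

theorem gen_ne_one (i : Fin m) : gen i ≠ 1 := fun h => by
  simpa [h] using normalForm_gen i

theorem normalForm_inv (w : UniversalCoxeterGroup m) :
    normalForm w⁻¹ = (normalForm w).reverse := by
  conv_lhs => rw [← wordProd_normalForm w, ← wordProd_reverse]
  refine normalForm_wordProd (isChain_reverse.mpr ?_)
  exact (isChain_normalForm w).imp fun _ _ h => h.symm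

theorem normalForm_mul_gen (w : UniversalCoxeterGroup m) (i : Fin m) :
    normalForm (w * gen i) = ((normalForm w).reverse.cancelCons i).reverse := by
  rw [← inv_inv (w * gen i), mul_inv_rev, inv_gen, normalForm_inv, normalForm_gen_mul,
    normalForm_inv]

theorem eq_one_or_eq_gen_of_commute {w : UniversalCoxeterGroup m} {i : Fin m}
    (h : Commute w (gen i)) : w = 1 ∨ w = gen i := by
  have hnf := congrArg normalForm h.eq
  rw [normalForm_mul_gen, normalForm_gen_mul] at hnf
  refine (eq_nil_or_eq_singleton_of_cancelCons_eq (isChain_normalForm w) hnf.symm).imp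
    normalForm_eq_nil_iff.mp fun hw => ?_
  rw [← wordProd_normalForm w, hw, wordProd_cons, wordProd_nil, mul_one]

theorem eq_one_or_isConj_gen_of_mul_self {t : UniversalCoxeterGroup m} (ht : t * t = 1) :
    t = 1 ∨ ∃ j, IsConj (gen j) t := by
  induction hk : (normalForm t).length using Nat.strong_induction_on generalizing t with
  | _ k ih =>
  match hnf : normalForm t with
  | [] => exact Or.inl (normalForm_eq_nil_iff.mp hnf)
  | [j] =>
    refine Or.inr ⟨j, ?_⟩
    rw [← wordProd_normalForm t, hnf, wordProd_cons, wordProd_nil, mul_one]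
  | a :: b :: s =>
    by_cases hlast : (b :: s).getLast? = some a
    · -- conjugating by the first letter shortens `t` at both ends
      set u := gen a * t * gen a with hu
      have hu2 : u * u = 1 := by simp [hu, mul_assoc, ← mul_assoc t t, ht]
      have hlen : (normalForm u).length < k := by
        rw [hu, normalForm_mul_gen, normalForm_gen_mul, hnf,
          cancelCons_of_head?_eq (l := a :: b :: s) rfl, tail_cons,
          cancelCons_of_head?_eq (by rwa [head?_reverse]), ← hk, hnf]
        simp
      have hut : IsConj u t := isConj_iff.mpr ⟨gen a, by simp [hu, mul_assoc]⟩
      rcases ih _ hlen hu2 rfl with hu1 | ⟨j, hj⟩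
      · exact Or.inl (isConj_one_right.mp (hu1 ▸ hut))
      · exact Or.inr ⟨j, hj.trans hut⟩
    · -- otherwise `t` is cyclically reduced: the normal form of `t * t` is that of `t`, twice
      exfalso
      have hchain : (normalForm t ++ normalForm t).IsChain (· ≠ ·) := by
        refine isChain_append.mpr ⟨isChain_normalForm t, isChain_normalForm t, ?_⟩
        rw [hnf, getLast?_cons_cons]
        rintro x hx y ⟨⟩ rfl
        exact hlast hx
      have := normalForm_wordProd hchain
      rw [wordProd_append, wordProd_normalForm, ht, normalForm_one, hnf] at this
      exact cons_ne_nil _ _ (append_eq_nil_iff.mp this.symm).1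

def castSuccHom : UniversalCoxeterGroup n →* UniversalCoxeterGroup (n + 1) :=
  lift (fun i => gen i.castSucc) fun _ => gen_mul_gen _

@[simp]
theorem castSuccHom_gen (i : Fin n) : castSuccHom (gen i) = gen i.castSucc :=
  lift_gen _ _ i

def retract : UniversalCoxeterGroup (n + 1) →* UniversalCoxeterGroup n :=
  lift (Fin.lastCases 1 gen) fun j => by induction j using Fin.lastCases <;> simp

@[simp]
theorem retract_gen_last : retract (gen (Fin.last n)) = 1 := by
  simp [retract]

@[simp]
theorem retract_castSuccHom (w : UniversalCoxeterGroup n) : retract (castSuccHom w) = w := by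
  suffices retract.comp castSuccHom = MonoidHom.id _ from DFunLike.congr_fun this w
  ext i
  simp [retract]

def extendEnd (f : UniversalCoxeterGroup n →* UniversalCoxeterGroup n) :
    UniversalCoxeterGroup (n + 1) →* UniversalCoxeterGroup (n + 1) :=
  lift (Fin.lastCases (gen (Fin.last n)) fun i => castSuccHom (f (gen i))) fun j => by
    induction j using Fin.lastCases <;> simp [← map_mul]

@[simp]
theorem extendEnd_gen_last (f : UniversalCoxeterGroup n →* UniversalCoxeterGroup n) :
    extendEnd f (gen (Fin.last n)) = gen (Fin.last n) := by
  simp [extendEnd]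

@[simp]
theorem extendEnd_gen_castSucc (f : UniversalCoxeterGroup n →* UniversalCoxeterGroup n)
    (i : Fin n) : extendEnd f (gen i.castSucc) = castSuccHom (f (gen i)) := by
  simp [extendEnd]

@[simp]
theorem extendEnd_castSuccHom (f : UniversalCoxeterGroup n →* UniversalCoxeterGroup n)
    (w : UniversalCoxeterGroup n) : extendEnd f (castSuccHom w) = castSuccHom (f w) := by
  suffices (extendEnd f).comp castSuccHom = castSuccHom.comp f from DFunLike.congr_fun this w
  ext i
  simp

theorem extendEnd_comp (f g : UniversalCoxeterGroup n →* UniversalCoxeterGroup n) :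
    extendEnd (f.comp g) = (extendEnd f).comp (extendEnd g) := by
  ext j
  induction j using Fin.lastCases with
  | last => simp
  | cast i => simp

theorem extendEnd_id : extendEnd (MonoidHom.id (UniversalCoxeterGroup n)) = MonoidHom.id _ := by
  ext j
  induction j using Fin.lastCases with
  | last => simp
  | cast i => simp

def extendAut : MulAut (UniversalCoxeterGroup n) →* MulAut (UniversalCoxeterGroup (n + 1)) where
  toFun φ := (extendEnd φ.toMonoidHom).toMulEquiv (extendEnd φ.symm.toMonoidHom)
    (by rw [← extendEnd_comp, ← extendEnd_id]; congr; ext; simp)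
    (by rw [← extendEnd_comp, ← extendEnd_id]; congr; ext; simp)
  map_one' := MulEquiv.ext fun w => by
    show extendEnd (MonoidHom.id _) w = w
    rw [extendEnd_id, MonoidHom.id_apply]
  map_mul' φ ψ := MulEquiv.ext fun w => by
    simp [MulAut.mul_def, extendEnd_comp]

@[simp]
theorem extendAut_apply (φ : MulAut (UniversalCoxeterGroup n))
    (w : UniversalCoxeterGroup (n + 1)) : extendAut φ w = extendEnd φ.toMonoidHom w := rfl

theorem outProj_comp_extendAut_injective :
    Function.Injective ((outProj (UniversalCoxeterGroup (n + 1))).comp (extendAut (n := n))) := by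
  refine (injective_iff_map_eq_one _).mpr fun φ hφ => ?_
  obtain ⟨g, hg⟩ := outProj_eq_one_iff.mp hφ
  have hcomm : Commute g (gen (Fin.last n)) := by
    have := DFunLike.congr_fun hg (gen (Fin.last n))
    simp only [MulAut.conj_apply, extendAut_apply, extendEnd_gen_last] at this
    exact mul_inv_eq_iff_eq_mul.mp this
  have hg1 : retract g = 1 := by
    rcases eq_one_or_eq_gen_of_commute hcomm with rfl | rfl <;> simp
  refine MulEquiv.ext fun w => ?_
  simpa [hg1] using congrArg retract (DFunLike.congr_fun hg (castSuccHom w)).symm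

theorem finite_monoidHom (F : Type*) [Group F] [Finite F] :
    Finite (UniversalCoxeterGroup n →* F) :=
  Finite.of_injective (fun ρ i => ρ (gen i)) fun _ _ h => hom_ext (congrFun h)

theorem finiteIndex_map_stabilizer_gen (i : Fin n) :
    ((MulAction.stabilizer (MulAut (UniversalCoxeterGroup n)) (gen i)).map
      (outProj (UniversalCoxeterGroup n))).FiniteIndex := by
  set T := MulAction.stabilizer (MulAut (UniversalCoxeterGroup n)) (ConjClasses.mk (gen i))
  have horbit : MulAction.orbit (MulAut (UniversalCoxeterGroup n)) (ConjClasses.mk (gen i)) ⊆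
      Set.range fun j => ConjClasses.mk (gen j) := by
    rintro _ ⟨φ, rfl⟩
    have hsq : φ (gen i) * φ (gen i) = 1 := by rw [← map_mul, gen_mul_gen, map_one]
    obtain ⟨j, hj⟩ := (eq_one_or_isConj_gen_of_mul_self hsq).resolve_left
      ((map_ne_one_iff φ φ.injective).mpr (gen_ne_one i))
    refine ⟨j, ?_⟩
    show _ = φ • _
    rw [MulAut.smul_conjClassesMk]
    exact ConjClasses.mk_eq_mk_iff_isConj.mpr hj
  have hT : T.FiniteIndex := ⟨(MulAction.index_stabilizer _ _).trans_ne <|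
    Set.ncard_ne_zero_of_mem (MulAction.mem_orbit_self _) ((Set.finite_range _).subset horbit)⟩
  have hle : T.map (outProj _) ≤ (MulAction.stabilizer _ (gen i)).map (outProj _) := by
    rintro _ ⟨φ, hφ, rfl⟩
    rw [SetLike.mem_coe, MulAction.mem_stabilizer_iff, MulAut.smul_conjClassesMk] at hφ
    obtain ⟨g, hg⟩ := isConj_iff.mp (ConjClasses.mk_eq_mk_iff_isConj.mp hφ)
    refine ⟨MulAut.conj g * φ, hg, ?_⟩
    rw [map_mul, outProj_eq_one_iff.mpr ⟨g, rfl⟩, one_mul]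
  have : (T.map (outProj _)).FiniteIndex :=
    ⟨ne_zero_of_dvd_ne_zero hT.index_ne_zero (Subgroup.index_map_dvd T (outProj_surjective _))⟩
  exact Subgroup.finiteIndex_of_le hle

theorem conj_gen_eq_one_of_mem_ker_precompPerm {i : Fin n}
    (h : MulAut.conj (gen i) ∈
      (MulAut.precompPerm (UniversalCoxeterGroup n) (Equiv.Perm (Fin 3))).ker) :
    MulAut.conj (gen i) = 1 := by
  obtain ⟨j, hji⟩ | hi := em (∃ j, j ≠ i)
  swap
  · refine MulEquiv.toMonoidHom_injective (hom_ext fun j => ?_)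
    simp [not_exists_not.mp hi j]
  -- otherwise `x_i, x_j ↦ (0 1), (0 2)` is a representation in which `x_i` is not central
  exfalso
  let ρ := lift (fun k => if k = i then Equiv.swap (0 : Fin 3) 1 else Equiv.swap 0 2)
    fun k => by split_ifs <;> exact Equiv.swap_mul_self _ _
  have hconj : Equiv.swap (0 : Fin 3) 1 * Equiv.swap 0 2 * Equiv.swap 0 1 = Equiv.swap 0 2 := by
    simpa [ρ, MulAut.conj_symm_apply, hji] using
      DFunLike.congr_fun (MulAut.mem_ker_precompPerm.mp h ρ) (gen j)
  exact absurd hconj (by decide)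

theorem splitsVirtually_outProj (i : Fin n) :
    SplitsVirtually (outProj (UniversalCoxeterGroup n)) := by
  have := finiteIndex_map_stabilizer_gen i
  have := finite_monoidHom (n := n) (Equiv.Perm (Fin 3))
  have := Subgroup.finiteIndex_map_inf (outProj _) (MulAction.stabilizer _ (gen i))
    (MulAut.precompPerm (UniversalCoxeterGroup n) (Equiv.Perm (Fin 3))).ker
  refine splitsVirtually_of_injective_comp_subtype _
    (MulAction.stabilizer _ (gen i) ⊓ (MulAut.precompPerm _ (Equiv.Perm (Fin 3))).ker) <|
    (injective_iff_map_eq_one _).mpr ?_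
  rintro ⟨φ, hstab, hker⟩ hφ
  obtain ⟨g, rfl⟩ := outProj_eq_one_iff.mp hφ
  refine Subtype.ext ?_
  have hcomm : Commute g (gen i) := mul_inv_eq_iff_eq_mul.mp hstab
  rcases eq_one_or_eq_gen_of_commute hcomm with rfl | rfl
  · exact map_one _
  · exact conj_gen_eq_one_of_mem_ker_precompPerm hker

end UniversalCoxeterGroup

/-- `Out(W_n)` virtually embeds in `Out(W_{n+1})`. -/
theorem statement19 (n : ℕ) (hn : 1 ≤ n) :
    ∃ O : Subgroup (Out (UniversalCoxeterGroup n)), O.FiniteIndex ∧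
      ∃ φ : ↥O →* Out (UniversalCoxeterGroup (n + 1)), Function.Injective φ :=
  (UniversalCoxeterGroup.splitsVirtually_outProj ⟨0, hn⟩).exists_finiteIndex_injective
    UniversalCoxeterGroup.outProj_comp_extendAut_injective
end
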